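/- arXiv:2004.04087 — 4 statements merged into one kernel-verified Lean document; each statement's English description precedes it below -/
import Mathlib

section
/- Let g(s) = ∑_{n≥2} b_n n^{−s} be a Dirichlet series with finite abscissa of convergence which extends to a holomorphic function on ℂ_0 satisfying sup_{Re s > 0} (Re s)|g′(s)| < ∞. Then for every ε > 0 the function g is bounded on the half-plane ℂ_ε = {Re s > ε}; in particular the abscissa of regularity and boundedness of g satisfies σ_b ≤ 0. -/
/-!
Fix `ε > 0`. The Bloch condition bounds `‖g'‖` by `B / ε` on `Re s ≥ ε`, so by the mean value
theorem `g` moves by at most `B T / ε` along a horizontal segment of length `T`. Shifting every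
point of `ℂ_ε` to the right by a fixed `T` lands it in a closed half-plane `Re s ≥ σ₁` of absolute
convergence, where `|g| ≤ ∑ |b_n| n^{-σ₁}`.
-/

open Complex

lemma norm_natCast_cpow_neg_le_of_re_le {s w : ℂ} (hw : w ≠ 0) (hsw : s.re ≤ w.re) (n : ℕ) :
    ‖(n : ℂ) ^ (-w)‖ ≤ ‖(n : ℂ) ^ (-s)‖ := by
  rcases Nat.eq_zero_or_pos n with rfl | hn
  · simp [zero_cpow (neg_ne_zero.2 hw)]
  rw [norm_natCast_cpow_of_pos hn, norm_natCast_cpow_of_pos hn]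
  exact Real.rpow_le_rpow_of_exponent_le (by exact_mod_cast hn) (by simpa using hsw)

lemma norm_tsum_mul_cpow_neg_le {b : ℕ → ℂ} {s w : ℂ}
    (hs : Summable fun n : ℕ => ‖b n * (n : ℂ) ^ (-s)‖) (hw : w ≠ 0) (hsw : s.re ≤ w.re) :
    ‖∑' n : ℕ, b n * (n : ℂ) ^ (-w)‖ ≤ ∑' n : ℕ, ‖b n * (n : ℂ) ^ (-s)‖ := by
  have hterm (n : ℕ) : ‖b n * (n : ℂ) ^ (-w)‖ ≤ ‖b n * (n : ℂ) ^ (-s)‖ := by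
    rw [norm_mul, norm_mul]
    exact mul_le_mul_of_nonneg_left (norm_natCast_cpow_neg_le_of_re_le hw hsw n) (norm_nonneg _)
  have hw_sum : Summable fun n : ℕ => ‖b n * (n : ℂ) ^ (-w)‖ :=
    hs.of_nonneg_of_le (fun _ => norm_nonneg _) hterm
  exact (norm_tsum_le_tsum_norm hw_sum).trans (hw_sum.tsum_le_tsum hterm hs)

section Bloch

variable {g : ℂ → ℂ} {B ε : ℝ}

lemma norm_deriv_le_of_re_mul_norm_deriv_le (hε : 0 < ε)
    (hB : ∀ s : ℂ, 0 < s.re → s.re * ‖deriv g s‖ ≤ B) {s : ℂ} (hs : ε ≤ s.re) :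
    ‖deriv g s‖ ≤ B / ε := by
  rw [le_div_iff₀ hε]
  calc ‖deriv g s‖ * ε ≤ ‖deriv g s‖ * s.re := by gcongr
    _ = s.re * ‖deriv g s‖ := mul_comm _ _
    _ ≤ B := hB s (hε.trans_le hs)

lemma norm_sub_le_of_re_mul_norm_deriv_le (hε : 0 < ε)
    (hdiff : DifferentiableOn ℂ g {s : ℂ | 0 < s.re})
    (hB : ∀ s : ℂ, 0 < s.re → s.re * ‖deriv g s‖ ≤ B) {x y : ℂ} (hx : ε ≤ x.re)
    (hy : ε ≤ y.re) : ‖g y - g x‖ ≤ B / ε * ‖y - x‖ := by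
  have hopen : IsOpen {s : ℂ | 0 < s.re} := isOpen_lt continuous_const continuous_re
  refine (convex_halfSpace_re_ge ε).norm_image_sub_le_of_norm_deriv_le (fun s hs => ?_)
    (fun s hs => norm_deriv_le_of_re_mul_norm_deriv_le hε hB hs) hx hy
  exact hdiff.differentiableAt (hopen.mem_nhds (hε.trans_le hs))

end Bloch

theorem statement3_general (b : ℕ → ℂ) (g : ℂ → ℂ) (B : ℝ)
    (hconv : ∃ σ₀ : ℝ, ∀ s : ℂ, σ₀ < s.re →
      Summable (fun n : ℕ => ‖b n * (n : ℂ) ^ (-s)‖) ∧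
        g s = ∑' n : ℕ, b n * (n : ℂ) ^ (-s))
    (hdiff : DifferentiableOn ℂ g {s : ℂ | 0 < s.re})
    (hB : ∀ s : ℂ, 0 < s.re → s.re * ‖deriv g s‖ ≤ B) :
    ∀ ε : ℝ, 0 < ε → ∃ M : ℝ, ∀ s : ℂ, ε < s.re → ‖g s‖ ≤ M := by
  intro ε hε
  obtain ⟨σ₀, hσ₀⟩ := hconv
  set σ₁ : ℝ := max (σ₀ + 1) ε
  have hσ₀₁ : σ₀ < σ₁ := (lt_add_one σ₀).trans_le (le_max_left _ _)
  have hεσ₁ : ε ≤ σ₁ := le_max_right _ _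
  refine ⟨∑' n : ℕ, ‖b n * (n : ℂ) ^ (-(σ₁ : ℂ))‖ + B / ε * (σ₁ - ε), fun s hs => ?_⟩
  set w : ℂ := s + ((σ₁ - ε : ℝ) : ℂ)
  have hw_re : w.re = s.re + (σ₁ - ε) := by simp [w]
  have hgw : ‖g w‖ ≤ ∑' n : ℕ, ‖b n * (n : ℂ) ^ (-(σ₁ : ℂ))‖ := by
    rw [(hσ₀ w (by linarith)).2]
    have hw_ne : w ≠ 0 := ne_of_apply_ne re (by rw [zero_re]; linarith)
    exact norm_tsum_mul_cpow_neg_le (hσ₀ σ₁ (by simpa using hσ₀₁)).1 hw_ne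
      (by rw [ofReal_re]; linarith)
  have hgs : ‖g s - g w‖ ≤ B / ε * (σ₁ - ε) := by
    have := norm_sub_le_of_re_mul_norm_deriv_le hε hdiff hB (x := w) (by linarith) hs.le
    rwa [norm_sub_rev s w, show w - s = ((σ₁ - ε : ℝ) : ℂ) by simp [w], norm_real,
      Real.norm_of_nonneg (sub_nonneg.2 hεσ₁)] at this
  linarith [norm_le_norm_add_norm_sub' (g s) (g w)]

/-- If a Dirichlet series `∑_{n≥2} b_n n^{−s}` converges absolutely on some
half-plane `ℂ_{σ₀}` and its sum extends to a holomorphic function `g` on `ℂ_0` with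
`sup_{Re s>0} (Re s)|g′(s)| ≤ B < ∞`, then `g` is bounded on every half-plane `ℂ_ε`, `ε > 0`;
in particular `σ_b(g) ≤ 0`. -/
theorem statement3 (b : ℕ → ℂ) (g : ℂ → ℂ) (B : ℝ)
    (hb : ∀ n, b n ≠ 0 → 2 ≤ n)
    (hconv : ∃ σ₀ : ℝ, ∀ s : ℂ, σ₀ < s.re →
      Summable (fun n : ℕ => ‖b n * (n : ℂ) ^ (-s)‖) ∧
        g s = ∑' n : ℕ, b n * (n : ℂ) ^ (-s))
    (hdiff : DifferentiableOn ℂ g {s : ℂ | 0 < s.re})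
    (hB : ∀ s : ℂ, 0 < s.re → s.re * ‖deriv g s‖ ≤ B) :
    ∀ ε : ℝ, 0 < ε → ∃ M : ℝ, ∀ s : ℂ, ε < s.re → ‖g s‖ ≤ M :=
  statement3_general b g B hconv hdiff hB
end

section
/- Let w : ℕ_{≥1} → (0,∞) satisfy w(k) ≤ w(kl) for all positive integers k, l, and let (b_n)_{n≥2} be complex numbers. Suppose C ≥ 0 is such that for every square-summable complex sequence (a_n): ∑_{n≥2} (log n)^{−2} |∑_{k|n, k≥2} (log k) b_k a_{n/k}|² ≤ C² ∑_{n≥1} |a_n|². Then for every complex sequence (a_n) with ∑_{n≥1}|a_n|²/w(n) < ∞: ∑_{n≥2} w(n)^{−1}(log n)^{−2} |∑_{k|n, k≥2} (log k) b_k a_{n/k}|² ≤ C² ∑_{n≥1} |a_n|²/w(n). (That is: if the Volterra operator T_g with symbol g = ∑_{n≥2} b_n n^{−s} is bounded on H², then it is bounded on H²_w with ‖T_g‖_{L(H²_w)} ≤ ‖T_g‖_{L(H²)}.) -/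
open scoped ENNReal

/-- The generalized divisor function `d_γ(n)`, multiplicative with
`d_γ(p^r) = γ(γ+1)⋯(γ+r−1)/r!`. -/
noncomputable def dCoef (γ : ℝ) (n : ℕ) : ℝ :=
  n.factorization.prod fun _ r => (∏ i ∈ Finset.range r, (γ + i)) / (r.factorial : ℝ)

/-- `w` is one of the two admissible weights for the parameter `β`, with associated
exponent `δ`: either `w(n) = d(n)^β` with `δ = 2^β − 1`, or `w(n) = d_{β+1}(n)`
with `δ = β`. -/
def IsAdmissible (β : ℝ) (w : ℕ → ℝ) (δ : ℝ) : Prop :=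
  ((w = fun n => ((n.divisors.card : ℝ)) ^ β) ∧ δ = (2 : ℝ) ^ β - 1) ∨
  (w = dCoef (β + 1) ∧ δ = β)

/-- `∑_{n≥2} w(n)⁻¹ (log n)⁻² |∑_{k∣n, k≥2} (log k) b_k a_{n/k}|²`, the square of the
`H²_w`-norm of `T_g f` where `g, f` have coefficients `b, a`. -/
noncomputable def volterraSumLHS (w : ℕ → ℝ) (b a : ℕ → ℂ) : ℝ≥0∞ :=
  ∑' n : ℕ, if 2 ≤ n then
    ENNReal.ofReal
      (‖∑ k ∈ n.divisors.filter (fun k => 2 ≤ k),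
          (Real.log k : ℂ) * b k * a (n / k)‖ ^ 2 / (w n * Real.log n ^ 2))
  else 0

/-- The squared norm `∑_{n≥1} |a_n|²/w(n)` in `H²_w`. -/
noncomputable def hNorm2 (w : ℕ → ℝ) (a : ℕ → ℂ) : ℝ≥0∞ :=
  ∑' n : ℕ, if 1 ≤ n then ENNReal.ofReal (‖a n‖ ^ 2 / w n) else 0

/-- The Volterra operator with symbol `g(s) = ∑_{n≥2} b_n n^{−s}` is bounded on `H²_w`
with norm at most `C`. -/
def VolterraBounded (w : ℕ → ℝ) (b : ℕ → ℂ) (C : ℝ) : Prop :=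
  ∀ a : ℕ → ℂ, volterraSumLHS w b a ≤ ENNReal.ofReal (C ^ 2) * hNorm2 w a

/-- The coefficients `b` are supported on integers all of whose prime factors lie among
the first `d` primes (the class `𝒟_d`). -/
def SmoothSupport (d : ℕ) (b : ℕ → ℂ) : Prop :=
  ∀ n, b n ≠ 0 → ∀ p, p.Prime → p ∣ n → ∃ j < d, p = Nat.nth Nat.Prime j

/-! Writing `1 / w(n) = ∫₀^∞ 𝟙[t < 1 / w(n)] dt`, both sides of the weighted inequality become
integrals over `t > 0` of unweighted sums restricted to `U_t = {n | t < 1 / w(n)}`. Since `w` grows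
along multiples, `U_t` is closed under taking divisors, so the coefficients of `T_g f` at `n ∈ U_t`
only see the restriction of `f` to `U_t`; the unweighted bound applied to that restriction bounds the
integrands pointwise. -/

open MeasureTheory Set

theorem tsum_ofReal_mul_eq_setLIntegral {ι : Type*} [Countable ι] (v : ι → ℝ) (f : ι → ℝ≥0∞) :
    ∑' i, ENNReal.ofReal (v i) * f i = ∫⁻ t in Ioi 0, ∑' i, {i | t < v i}.indicator f i := by
  have hind : ∀ t i, {i | t < v i}.indicator f i = (Iio (v i)).indicator (fun _ => f i) t :=
    fun t i => by simp only [indicator_apply, mem_Iio]; rfl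
  simp_rw [hind]
  rw [lintegral_tsum fun i => (measurable_const.indicator measurableSet_Iio).aemeasurable]
  refine tsum_congr fun i => ?_
  rw [lintegral_indicator_const measurableSet_Iio, Measure.restrict_apply measurableSet_Iio,
    Iio_inter_Ioi, Real.volume_Ioo, sub_zero, mul_comm]

/-- The `n`-th coefficient of `T_g f`, up to the factor `(log n)⁻¹`. -/
noncomputable def volterraCoeff (b a : ℕ → ℂ) (n : ℕ) : ℂ :=
  ∑ k ∈ n.divisors.filter (fun k => 2 ≤ k), (Real.log k : ℂ) * b k * a (n / k)

noncomputable def volterraTerm (b a : ℕ → ℂ) (n : ℕ) : ℝ≥0∞ :=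
  if 2 ≤ n then ENNReal.ofReal (‖volterraCoeff b a n‖ ^ 2 / Real.log n ^ 2) else 0

noncomputable def normTerm (a : ℕ → ℂ) (n : ℕ) : ℝ≥0∞ :=
  if 1 ≤ n then ENNReal.ofReal (‖a n‖ ^ 2) else 0

theorem volterraSumLHS_eq_tsum {w : ℕ → ℝ} (hpos : ∀ n, 1 ≤ n → 0 < w n) (b a : ℕ → ℂ) :
    volterraSumLHS w b a = ∑' n, ENNReal.ofReal (w n)⁻¹ * volterraTerm b a n := by
  refine tsum_congr fun n => ?_
  by_cases hn : 2 ≤ n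
  · rw [volterraTerm, if_pos hn, if_pos hn,
      ← ENNReal.ofReal_mul (inv_nonneg.2 (hpos n (by omega)).le), volterraCoeff]
    ring_nf
  · rw [volterraTerm, if_neg hn, if_neg hn, mul_zero]

theorem volterraSumLHS_one (b a : ℕ → ℂ) :
    volterraSumLHS (fun _ => 1) b a = ∑' n, volterraTerm b a n := by
  simp only [volterraSumLHS, volterraTerm, volterraCoeff, one_mul]

theorem hNorm2_eq_tsum {w : ℕ → ℝ} (hpos : ∀ n, 1 ≤ n → 0 < w n) (a : ℕ → ℂ) :
    hNorm2 w a = ∑' n, ENNReal.ofReal (w n)⁻¹ * normTerm a n := by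
  refine tsum_congr fun n => ?_
  by_cases hn : 1 ≤ n
  · rw [normTerm, if_pos hn, if_pos hn, ← ENNReal.ofReal_mul (inv_nonneg.2 (hpos n hn).le),
      div_eq_inv_mul]
  · rw [normTerm, if_neg hn, if_neg hn, mul_zero]

theorem hNorm2_one (a : ℕ → ℂ) : hNorm2 (fun _ => 1) a = ∑' n, normTerm a n := by
  simp only [hNorm2, normTerm, div_one]

theorem normTerm_indicator (U : Set ℕ) (a : ℕ → ℂ) :
    normTerm (U.indicator a) = U.indicator (normTerm a) := by
  ext n
  by_cases hn : n ∈ U <;> simp [normTerm, indicator_of_mem, indicator_of_notMem, hn]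

theorem volterraCoeff_indicator {U : Set ℕ} {n : ℕ} (hU : ∀ m, m ∣ n → m ∈ U) (b a : ℕ → ℂ) :
    volterraCoeff b (U.indicator a) n = volterraCoeff b a n :=
  Finset.sum_congr rfl fun k hk => by
    rw [indicator_of_mem (hU _ (Nat.div_dvd_of_dvd (Nat.dvd_of_mem_divisors (Finset.mem_filter.1 hk).1)))]

theorem volterraTerm_indicator_le {U : Set ℕ}
    (hU : ∀ m n, m ∣ n → n ≠ 0 → n ∈ U → m ∈ U) (b a : ℕ → ℂ) (n : ℕ) :
    U.indicator (volterraTerm b a) n ≤ volterraTerm b (U.indicator a) n := by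
  by_cases hn : n ∈ U
  · by_cases hn2 : 2 ≤ n
    · rw [indicator_of_mem hn, volterraTerm, volterraTerm, if_pos hn2, if_pos hn2,
        volterraCoeff_indicator fun m hm => hU m n hm (by omega) hn]
    · rw [indicator_of_mem hn, volterraTerm, if_neg hn2]
      exact zero_le
  · rw [indicator_of_notMem hn]
    exact zero_le

theorem tsum_indicator_volterraTerm_le {U : Set ℕ}
    (hU : ∀ m n, m ∣ n → n ≠ 0 → n ∈ U → m ∈ U) {b : ℕ → ℂ} {C : ℝ}
    (hbd : VolterraBounded (fun _ => 1) b C) (a : ℕ → ℂ) :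
    ∑' n, U.indicator (volterraTerm b a) n ≤
      ENNReal.ofReal (C ^ 2) * ∑' n, U.indicator (normTerm a) n :=
  calc ∑' n, U.indicator (volterraTerm b a) n
      ≤ ∑' n, volterraTerm b (U.indicator a) n :=
        ENNReal.tsum_le_tsum (volterraTerm_indicator_le hU b a)
    _ = volterraSumLHS (fun _ => 1) b (U.indicator a) := (volterraSumLHS_one b _).symm
    _ ≤ ENNReal.ofReal (C ^ 2) * hNorm2 (fun _ => 1) (U.indicator a) := hbd _
    _ = ENNReal.ofReal (C ^ 2) * ∑' n, U.indicator (normTerm a) n := by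
        rw [hNorm2_one, normTerm_indicator]

theorem inv_le_inv_of_dvd {w : ℕ → ℝ} (hpos : ∀ n, 1 ≤ n → 0 < w n)
    (hmono : ∀ k l, 1 ≤ k → 1 ≤ l → w k ≤ w (k * l)) {m n : ℕ} (hmn : m ∣ n) (hn : n ≠ 0) :
    (w n)⁻¹ ≤ (w m)⁻¹ := by
  obtain ⟨l, rfl⟩ := hmn
  have hm : 1 ≤ m := Nat.one_le_iff_ne_zero.2 (left_ne_zero_of_mul hn)
  exact inv_anti₀ (hpos m hm) (hmono m l hm (Nat.one_le_iff_ne_zero.2 (right_ne_zero_of_mul hn)))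

theorem statement7_general (w : ℕ → ℝ) (hpos : ∀ n, 1 ≤ n → 0 < w n)
    (hmono : ∀ k l, 1 ≤ k → 1 ≤ l → w k ≤ w (k * l))
    (b : ℕ → ℂ) (C : ℝ)
    (hbd : VolterraBounded (fun _ => 1) b C) :
    VolterraBounded w b C := by
  intro a
  have hclosed : ∀ t : ℝ, ∀ m n, m ∣ n → n ≠ 0 →
      n ∈ {n | t < (w n)⁻¹} → m ∈ {n | t < (w n)⁻¹} :=
    fun t m n hmn hn ht => lt_of_lt_of_le ht (inv_le_inv_of_dvd hpos hmono hmn hn)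
  rw [volterraSumLHS_eq_tsum hpos, hNorm2_eq_tsum hpos, tsum_ofReal_mul_eq_setLIntegral,
    tsum_ofReal_mul_eq_setLIntegral, ← lintegral_const_mul' _ _ ENNReal.ofReal_ne_top]
  exact lintegral_mono fun t => tsum_indicator_volterraTerm_le (hclosed t) hbd a

/-- If the weight satisfies `w(k) ≤ w(kl)` and `T_g` is bounded on `H²`
(the unweighted case `w ≡ 1`) with norm at most `C`, then `T_g` is bounded on `H²_w` with
norm at most `C`. -/
theorem statement7 (w : ℕ → ℝ) (hpos : ∀ n, 1 ≤ n → 0 < w n)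
    (hmono : ∀ k l, 1 ≤ k → 1 ≤ l → w k ≤ w (k * l))
    (b : ℕ → ℂ) (C : ℝ) (hC : 0 ≤ C)
    (hbd : VolterraBounded (fun _ => 1) b C) :
    VolterraBounded w b C :=
  statement7_general w hpos hmono b C hbd
end

section
/- Let w : ℕ_{≥1} → (0,∞) be multiplicative with w(mn) ≤ w(m)w(n) and w(m) ≤ w(mn) for all m, n ≥ 1 (in particular, both admissible weights d(n)^β and d_{β+1}(n) qualify). Let g(s) = ∑_{n≥2} b_n n^{−s} be a Dirichlet series with some b_N ≠ 0 (N ≥ 2), and for n ≥ 1 let e_{w,n}(s) = w(n)^{1/2} n^{−s}, so that ‖T_g e_{w,n}‖²_{H²_w} = ∑_{k≥2} |b_k|² (log k)² (log(kn))^{−2} · w(n)/w(kn). Then for every p ∈ (0, ∞): ∑_{n≥1} ‖T_g e_{w,n}‖^p_{H²_w} = +∞. Consequently T_g does not belong to any Schatten class S_p(H²_w), 0 < p < ∞. -/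
open scoped ENNReal

/-!
Keeping only the term `k = N` of the inner sum and using `w(Nn) ≤ w(N) w(n)` gives
`‖T_g e_{w,n}‖² ≥ c / log(Nn)²` with `c = |b_N|² (log N)² / w(N) > 0`. Since `log x ≤ p x^{1/p}`,
`(c / log(Nn)²)^{p/2}` dominates a multiple of `1/n`, and the harmonic series diverges.
-/

theorem Real.log_rpow_le_mul {x p : ℝ} (hx : 1 ≤ x) (hp : 0 < p) :
    Real.log x ^ p ≤ p ^ p * x := by
  have hlog : Real.log x ≤ p * x ^ p⁻¹ := by
    simpa [div_inv_eq_mul, mul_comm] using Real.log_le_rpow_div (by linarith) (inv_pos.2 hp)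
  calc Real.log x ^ p ≤ (p * x ^ p⁻¹) ^ p :=
        Real.rpow_le_rpow (Real.log_nonneg hx) hlog hp.le
    _ = p ^ p * x := by
        rw [Real.mul_rpow hp.le (by positivity), ← Real.rpow_mul (by linarith),
          inv_mul_cancel₀ hp.ne', Real.rpow_one]

theorem ENNReal.tsum_ofReal_eq_top_of_not_summable {α : Type*} {f : α → ℝ} (hf : ∀ a, 0 ≤ f a)
    (h : ¬Summable f) : ∑' a, ENNReal.ofReal (f a) = ∞ := by
  by_contra hne
  exact h ((ENNReal.summable_toReal hne).congr fun a => ENNReal.toReal_ofReal (hf a))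

theorem tsum_ofReal_div_log_sq_rpow_eq_top {a c p : ℝ} (ha : 1 < a) (hc : 0 < c) (hp : 0 < p) :
    ∑' n : ℕ, ENNReal.ofReal (c / Real.log (a * n) ^ 2) ^ (p / 2) = ∞ := by
  set C := c ^ (p / 2) / (p ^ p * a)
  have hC : 0 < C := by positivity
  have harmonic : ∑' n : ℕ, ENNReal.ofReal (C * (n : ℝ)⁻¹) = ∞ :=
    ENNReal.tsum_ofReal_eq_top_of_not_summable (fun n => by positivity)
      ((summable_mul_left_iff hC.ne').not.2 Real.not_summable_natCast_inv)
  refine top_unique (harmonic.symm.trans_le (ENNReal.tsum_le_tsum fun n => ?_))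
  obtain rfl | hn := n.eq_zero_or_pos
  · simp
  have hx : 1 < a * n := one_lt_mul_of_lt_of_le ha (by exact_mod_cast hn)
  have hL : 0 < Real.log (a * n) := Real.log_pos hx
  have hpow : (Real.log (a * n) ^ 2) ^ (p / 2) = Real.log (a * n) ^ p := by
    rw [← Real.rpow_natCast, ← Real.rpow_mul hL.le]
    norm_num [mul_div_cancel₀]
  rw [ENNReal.ofReal_rpow_of_nonneg (by positivity) (by positivity),
    Real.div_rpow hc.le (by positivity), hpow]
  refine ENNReal.ofReal_le_ofReal ?_
  calc C * (n : ℝ)⁻¹ = c ^ (p / 2) / (p ^ p * (a * n)) := by ring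
    _ ≤ c ^ (p / 2) / Real.log (a * n) ^ p :=
        div_le_div_of_nonneg_left (by positivity) (by positivity)
          (Real.log_rpow_le_mul hx.le hp)

theorem inv_le_div_mul_of_submultiplicative {w : ℕ → ℝ} (hpos : ∀ n, 1 ≤ n → 0 < w n)
    (hsub : ∀ m n, 1 ≤ m → 1 ≤ n → w (m * n) ≤ w m * w n) {m n : ℕ} (hm : 1 ≤ m) (hn : 1 ≤ n) :
    (w m)⁻¹ ≤ w n / w (m * n) := by
  rw [le_div_iff₀ (hpos _ (Nat.one_le_iff_ne_zero.2 (by positivity))), inv_mul_le_iff₀ (hpos m hm)]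
  exact hsub m n hm hn

theorem statement12_general (w : ℕ → ℝ) (hpos : ∀ n, 1 ≤ n → 0 < w n)
    (hsub : ∀ m n, 1 ≤ m → 1 ≤ n → w (m * n) ≤ w m * w n)
    (b : ℕ → ℂ)
    (N : ℕ) (hN : 2 ≤ N) (hbN : b N ≠ 0)
    (p : ℝ) (hp : 0 < p) :
    (∑' n : ℕ, if 1 ≤ n then
        (∑' k : ℕ, if 2 ≤ k then
            ENNReal.ofReal
              (‖b k‖ ^ 2 * (Real.log k) ^ 2 / (Real.log ((k : ℝ) * n)) ^ 2 *
                (w n / w (k * n)))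
          else 0) ^ (p / 2)
      else 0) = ⊤ := by
  have hN' : (1 : ℝ) < N := by exact_mod_cast hN
  set A := ‖b N‖ ^ 2 * Real.log N ^ 2
  have hA : 0 < A := by
    have hlogN := Real.log_pos hN'
    have hbN' := norm_pos_iff.2 hbN
    positivity
  refine top_unique ((tsum_ofReal_div_log_sq_rpow_eq_top hN' (div_pos hA (hpos N (by omega))) hp
    ).symm.trans_le (ENNReal.tsum_le_tsum fun n => ?_))
  obtain rfl | hn := n.eq_zero_or_pos
  · simp [hp]
  rw [if_pos (show 1 ≤ n from hn)]
  gcongr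
  calc ENNReal.ofReal (A / w N / Real.log (N * n) ^ 2)
      ≤ ENNReal.ofReal (A / Real.log (N * n) ^ 2 * (w n / w (N * n))) := by
        rw [div_right_comm, div_eq_mul_inv _ (w N)]
        gcongr
        exact inv_le_div_mul_of_submultiplicative hpos hsub (by omega) hn
    _ ≤ _ := by
        convert ENNReal.le_tsum N
        simp [hN, A]

/-- For a multiplicative weight `w` with `w(mn) ≤ w(m)w(n)` and
`w(m) ≤ w(mn)`, and a nonzero symbol `g(s) = ∑_{n≥2} b_n n^{−s}`, the quantities
`‖T_g e_{w,n}‖²_{H²_w} = ∑_{k≥2} |b_k|²(log k)²(log kn)⁻² w(n)/w(kn)` satisfy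
`∑_{n≥1} ‖T_g e_{w,n}‖^p = +∞` for every `0 < p < ∞`; hence `T_g` is in no Schatten
class. -/
theorem statement12 (w : ℕ → ℝ) (hpos : ∀ n, 1 ≤ n → 0 < w n)
    (hmul : ∀ m n, 1 ≤ m → 1 ≤ n → Nat.Coprime m n → w (m * n) = w m * w n)
    (hsub : ∀ m n, 1 ≤ m → 1 ≤ n → w (m * n) ≤ w m * w n)
    (hmono : ∀ m n, 1 ≤ m → 1 ≤ n → w m ≤ w (m * n))
    (b : ℕ → ℂ) (hb : ∀ n, b n ≠ 0 → 2 ≤ n)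
    (N : ℕ) (hN : 2 ≤ N) (hbN : b N ≠ 0)
    (p : ℝ) (hp : 0 < p) :
    (∑' n : ℕ, if 1 ≤ n then
        (∑' k : ℕ, if 2 ≤ k then
            ENNReal.ofReal
              (‖b k‖ ^ 2 * (Real.log k) ^ 2 / (Real.log ((k : ℝ) * n)) ^ 2 *
                (w n / w (k * n)))
          else 0) ^ (p / 2)
      else 0) = ⊤ :=
  statement12_general w hpos hsub b N hN hbN p hp
end

section
/- Let δ, η > 0 with 2η > 1 and δ + η > 1. Then the triple sum over primes S := ∑_{p₁,p₂,p₃ prime, p_j ≥ 3} [p₁ p₂ p₃ (log log p₁)^{2δ} (log log p₂)²]^{−1} · (log p₃)² · [(log log p₃)^{2η} (log(p₁ p₂ p₃))²]^{−1} is finite. -/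
/-!
Write `x, y, z` for `log p₁, log p₂, log p₃`. Since `z / (x + y + z) ≤ min 1 (z / x)` and
`log x ≤ K (x / z) log z` with `K = 1 + 1 / log log 3`, one gets
`(z / (x + y + z))² ≤ (K log z / log x)^t` for every `0 ≤ t ≤ 2`. This moves `t` powers of
`log log` from `p₃` to `p₁`, so the summand is at most `K^t` times a product of three terms
`1 / (p (log log p)^s)` with exponents `2δ + t`, `2`, `2η - t`, all of which exceed `1` for a
suitable `t`. Each such series over primes converges: Chebyshev's bound `π(x) ≪ x / log x` gives
`p_n ≫ n log n`, and two Cauchy condensations handle `∑ 1 / (n log n (log log n)^s)`.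
-/

open Real Filter

theorem one_lt_log_of_three_le {x : ℝ} (hx : 3 ≤ x) : 1 < log x := by
  rw [lt_log_iff_exp_lt (by linarith)]
  linarith [exp_one_lt_three]

theorem log_log_pos_of_three_le {x : ℝ} (hx : 3 ≤ x) : 0 < log (log x) :=
  log_pos (one_lt_log_of_three_le hx)

theorem summable_inv_mul_log_rpow {s : ℝ} (hs : 1 < s) :
    Summable fun n : ℕ => ((n : ℝ) * log n ^ s)⁻¹ := by
  rw [← summable_condensed_iff_of_eventually_nonneg]
  · refine ((summable_nat_rpow_inv.2 hs).mul_left (log 2 ^ s)⁻¹).congr fun k => ?_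
    push_cast
    rw [log_pow, mul_rpow (by positivity) (log_pos one_lt_two).le]
    field_simp
  · filter_upwards [eventually_ge_atTop 1] with n hn
    have : 0 ≤ log (n : ℝ) := log_nonneg (by exact_mod_cast hn)
    simp only [Pi.zero_apply]
    positivity
  · filter_upwards [eventually_ge_atTop 2] with n hn
    have hn' : (2 : ℝ) ≤ n := by exact_mod_cast hn
    have : 0 < log (n : ℝ) := log_pos (by linarith)
    push_cast
    gcongr <;> linarith

theorem summable_inv_mul_log_mul_log_log_rpow {s : ℝ} (hs : 1 < s) :
    Summable fun n : ℕ => ((n : ℝ) * log n * log (log n) ^ s)⁻¹ := by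
  rw [← summable_condensed_iff_of_eventually_nonneg]
  · refine ((summable_inv_mul_log_rpow hs).mul_left (2 ^ s / log 2)).of_norm_bounded_eventually_nat
      ?_
    filter_upwards [eventually_ge_atTop 4] with k hk
    have hk' : (4 : ℝ) ≤ k := by exact_mod_cast hk
    have hlog2 : 1 / 2 < log 2 := by linarith [log_two_gt_d9]
    have hlog4 : log 4 = 2 * log 2 := by
      rw [show (4 : ℝ) = 2 ^ 2 by norm_num, log_pow]; norm_num
    have hlogk : 2 * log 2 ≤ log k := hlog4 ▸ log_le_log (by norm_num) hk'
    have hhalf : log k / 2 ≤ log (k * log 2) := by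
      calc log k / 2 ≤ log k - log 2 := by linarith
        _ = log (k / 2) := (log_div (by positivity) two_ne_zero).symm
        _ ≤ log (k * log 2) := log_le_log (by positivity) (by nlinarith)
    have hpos : 0 < log (k : ℝ) / 2 := by linarith [log_pos one_lt_two]
    have hL : 0 < log (k * log 2) := by linarith
    calc ‖(2 : ℝ) ^ k *
          (((2 ^ k : ℕ) : ℝ) * log ((2 ^ k : ℕ) : ℝ) * log (log ((2 ^ k : ℕ) : ℝ)) ^ s)⁻¹‖
        = (k * log 2 * log (k * log 2) ^ s)⁻¹ := by
          push_cast
          rw [log_pow, norm_of_nonneg (by positivity)]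
          field_simp
      _ ≤ (k * log 2 * (log k / 2) ^ s)⁻¹ := by gcongr
      _ = 2 ^ s / log 2 * (k * log k ^ s)⁻¹ := by
          rw [div_rpow (by positivity) zero_le_two]
          field_simp
  · filter_upwards [eventually_ge_atTop 3] with n hn
    have hn' : (3 : ℝ) ≤ n := by exact_mod_cast hn
    have := log_log_pos_of_three_le hn'
    simp only [Pi.zero_apply]
    positivity
  · filter_upwards [eventually_ge_atTop 3] with n hn
    have hn' : (3 : ℝ) ≤ n := by exact_mod_cast hn
    have := one_lt_log_of_three_le hn'
    have := log_log_pos_of_three_le hn'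
    have : 0 < log ((n : ℝ) + 1) := log_pos (by linarith)
    push_cast
    gcongr <;> linarith

theorem eventually_mul_log_le_mul_nth_prime :
    ∀ᶠ n : ℕ in atTop, (n : ℝ) * log n ≤ (log 4 + 1) * Nat.nth Nat.Prime n := by
  have hp : Tendsto (fun n => (Nat.nth Nat.Prime n : ℝ)) atTop atTop :=
    tendsto_natCast_atTop_atTop.comp (Nat.nth_strictMono Nat.infinite_setOfPred_prime).tendsto_atTop
  filter_upwards [hp.eventually (Chebyshev.eventually_primeCounting_le one_pos),
    hp.eventually (eventually_gt_atTop 1), eventually_gt_atTop 0] with n hπ hp1 hn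
  rw [Nat.floor_natCast] at hπ
  have hnπ : n ≤ Nat.primeCounting (Nat.nth Nat.Prime n) := by
    conv_lhs => rw [← Nat.primeCounting'_nth_eq n]
    exact Nat.monotone_primeCounting' (Nat.le_succ _)
  have hnp : n ≤ Nat.nth Nat.Prime n := (Nat.add_two_le_nth_prime n).trans' (by omega)
  calc (n : ℝ) * log n ≤ n * log (Nat.nth Nat.Prime n) := by
        gcongr
    _ ≤ (log 4 + 1) * Nat.nth Nat.Prime n := by
        rw [← le_div_iff₀ (log_pos hp1)]
        exact (Nat.cast_le.2 hnπ).trans hπ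

noncomputable def primeLogLogWeight (s : ℝ) (n : ℕ) : ℝ :=
  if n.Prime ∧ 3 ≤ n then ((n : ℝ) * log (log n) ^ s)⁻¹ else 0

theorem primeLogLogWeight_nonneg (s : ℝ) (n : ℕ) : 0 ≤ primeLogLogWeight s n := by
  unfold primeLogLogWeight
  split_ifs with h
  · have := log_log_pos_of_three_le (by exact_mod_cast h.2 : (3 : ℝ) ≤ n)
    positivity
  · exact le_rfl

theorem summable_primeLogLogWeight {s : ℝ} (hs : 1 < s) : Summable (primeLogLogWeight s) := by
  have hinf := Nat.infinite_setOfPred_prime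
  rw [← (Nat.nth_injective hinf).summable_iff fun n hn => ?_]
  · refine ((summable_inv_mul_log_mul_log_log_rpow hs).mul_left (log 4 + 1)
      ).of_norm_bounded_eventually_nat ?_
    filter_upwards [eventually_mul_log_le_mul_nth_prime, eventually_ge_atTop 3] with n hbound hn
    have hnp : n + 2 ≤ Nat.nth Nat.Prime n := Nat.add_two_le_nth_prime n
    have h3 : 3 ≤ Nat.nth Nat.Prime n := by omega
    have hn' : (3 : ℝ) ≤ n := by exact_mod_cast hn
    have := one_lt_log_of_three_le hn'
    have := log_log_pos_of_three_le hn'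
    rw [Function.comp_apply, norm_of_nonneg (primeLogLogWeight_nonneg s _), primeLogLogWeight,
      if_pos ⟨Nat.prime_nth_prime n, h3⟩]
    calc ((Nat.nth Nat.Prime n : ℝ) * log (log (Nat.nth Nat.Prime n)) ^ s)⁻¹
        ≤ ((n * log n / (log 4 + 1)) * log (log n) ^ s)⁻¹ := by
          gcongr
          · rw [div_le_iff₀' (by positivity)]; exact hbound
          linarith
      _ = (log 4 + 1) * (n * log n * log (log n) ^ s)⁻¹ := by
          field_simp
  · rw [Nat.range_nth_of_infinite hinf] at hn
    rw [primeLogLogWeight, if_neg fun h => hn h.1]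

theorem div_le_mul_log_div_log {l x z : ℝ} (hl : 0 < l) (hz : 0 < z) (hzx : z ≤ x)
    (hlz : l ≤ log z) : z / x ≤ (1 + l⁻¹) * log z / log x := by
  have hx : 0 < x := hz.trans_le hzx
  have hr : 1 ≤ x / z := (one_le_div hz).2 hzx
  have hlogx : 0 < log x := (hl.trans_le hlz).trans_le (log_le_log hz hzx)
  have hlogr : log (x / z) ≤ x / z := (log_le_sub_one_of_pos (by positivity)).trans (by linarith)
  have hlz' : 1 ≤ l⁻¹ * log z := by rw [← div_eq_inv_mul, one_le_div hl]; exact hlz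
  have key : log x ≤ (x / z) * log z + (x / z) * (l⁻¹ * log z) :=
    calc log x = log z + log (x / z) := by rw [log_div hx.ne' hz.ne']; ring
      _ ≤ (x / z) * log z + (x / z) * (l⁻¹ * log z) := by gcongr <;> nlinarith
  rw [div_le_div_iff₀ hx hlogx]
  calc z * log x ≤ z * ((x / z) * log z + (x / z) * (l⁻¹ * log z)) := by gcongr
    _ = (1 + l⁻¹) * log z * x := by field_simp

theorem sq_div_add_add_le_rpow {l t x y z : ℝ} (hl : 0 < l) (ht0 : 0 ≤ t) (ht2 : t ≤ 2)
    (hx : 1 < x) (hy : 0 ≤ y) (hz : 0 < z) (hlz : l ≤ log z) :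
    (z / (x + y + z)) ^ 2 ≤ ((1 + l⁻¹) * log z / log x) ^ t := by
  have hlogx : 0 < log x := log_pos hx
  have hlogz : 0 < log z := hl.trans_le hlz
  have hK : 1 ≤ 1 + l⁻¹ := by have := inv_pos.2 hl; linarith
  set m := z / (x + y + z)
  have hm0 : 0 < m := by positivity
  have hm1 : m ≤ 1 := (div_le_one (by linarith)).2 (by linarith)
  have hm : m ≤ (1 + l⁻¹) * log z / log x := by
    rcases le_total x z with hxz | hzx
    · calc m ≤ 1 := hm1
        _ ≤ log z / log x := (one_le_div hlogx).2 (log_le_log (by linarith) hxz)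
        _ ≤ (1 + l⁻¹) * log z / log x := by
            rw [mul_div_assoc]
            exact le_mul_of_one_le_left (by positivity) hK
    · calc m ≤ z / x := div_le_div_of_nonneg_left hz.le (by linarith) (by linarith)
        _ ≤ (1 + l⁻¹) * log z / log x := div_le_mul_log_div_log hl hz hzx hlz
  calc m ^ 2 = m ^ (2 : ℝ) := (rpow_two m).symm
    _ ≤ m ^ t := rpow_le_rpow_of_exponent_ge hm0 hm1 ht2
    _ ≤ ((1 + l⁻¹) * log z / log x) ^ t := rpow_le_rpow hm0.le hm ht0

theorem summand_le_mul_prod {δ η t a b c : ℝ} (ht0 : 0 ≤ t) (ht2 : t ≤ 2)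
    (ha : 3 ≤ a) (hb : 3 ≤ b) (hc : 3 ≤ c) :
    (a * b * c * log (log a) ^ (2 * δ) * log (log b) ^ 2)⁻¹ *
        (log c ^ 2 / (log (log c) ^ (2 * η) * log (a * b * c) ^ 2)) ≤
      (1 + (log (log 3))⁻¹) ^ t * ((a * log (log a) ^ (2 * δ + t))⁻¹ *
        ((b * log (log b) ^ (2 : ℝ))⁻¹ * (c * log (log c) ^ (2 * η - t))⁻¹)) := by
  have h3 := log_log_pos_of_three_le le_rfl
  have hA := log_log_pos_of_three_le ha
  have hC := log_log_pos_of_three_le hc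
  have hLa := one_lt_log_of_three_le ha
  have hLb := one_lt_log_of_three_le hb
  have hLc := one_lt_log_of_three_le hc
  have hratio := sq_div_add_add_le_rpow h3 ht0 ht2 hLa (y := log b) (by linarith) (by linarith)
    (log_le_log (log_pos (by norm_num)) (log_le_log (by norm_num) hc))
  set P := (a * b * c * log (log a) ^ (2 * δ) * log (log b) ^ 2 * log (log c) ^ (2 * η))⁻¹
    with hP
  calc (a * b * c * log (log a) ^ (2 * δ) * log (log b) ^ 2)⁻¹ *
        (log c ^ 2 / (log (log c) ^ (2 * η) * log (a * b * c) ^ 2))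
      = (log c / (log a + log b + log c)) ^ 2 * P := by
        rw [hP, log_mul (by positivity) (by positivity), log_mul (by positivity) (by positivity)]
        field_simp
    _ ≤ ((1 + (log (log 3))⁻¹) * log (log c) / log (log a)) ^ t * P := by gcongr
    _ = _ := by
        rw [hP, div_rpow (by positivity) hA.le, mul_rpow (by positivity) hC.le, rpow_add hA,
          rpow_sub hC, rpow_two]
        field_simp

theorem statement17_general (δ η : ℝ) (hδ : 0 < δ)
    (h1 : 1 < 2 * η) (h2 : 1 < δ + η) :
    Summable (fun q : ℕ × ℕ × ℕ =>
      if q.1.Prime ∧ q.2.1.Prime ∧ q.2.2.Prime ∧ 3 ≤ q.1 ∧ 3 ≤ q.2.1 ∧ 3 ≤ q.2.2 then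
        ((q.1 : ℝ) * q.2.1 * q.2.2 * (Real.log (Real.log q.1)) ^ (2 * δ) *
            (Real.log (Real.log q.2.1)) ^ 2)⁻¹ *
          ((Real.log q.2.2) ^ 2 /
            ((Real.log (Real.log q.2.2)) ^ (2 * η) *
              (Real.log ((q.1 : ℝ) * q.2.1 * q.2.2)) ^ 2))
      else 0) := by
  obtain ⟨t, ht_lo, ht_hi⟩ : ∃ t, max 0 (1 - 2 * δ) < t ∧ t < min 2 (2 * η - 1) :=
    exists_between (max_lt (lt_min two_pos (by linarith)) (lt_min (by linarith) (by linarith)))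
  rw [max_lt_iff] at ht_lo
  rw [lt_min_iff] at ht_hi
  have hw : ∀ s, 0 ≤ primeLogLogWeight s := primeLogLogWeight_nonneg
  have hprod := (summable_primeLogLogWeight (s := 2 * δ + t) (by linarith)).mul_of_nonneg
    ((summable_primeLogLogWeight one_lt_two).mul_of_nonneg
      (summable_primeLogLogWeight (s := 2 * η - t) (by linarith)) (hw _) (hw _))
    (hw _) fun _ => mul_nonneg (hw _ _) (hw _ _)
  refine (hprod.mul_left ((1 + (log (log 3))⁻¹) ^ t)).of_nonneg_of_le (fun q => ?_) (fun q => ?_)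
  · split_ifs with h
    · obtain ⟨-, -, -, ha, -, hc⟩ := h
      have := log_log_pos_of_three_le (show (3 : ℝ) ≤ q.1 by exact_mod_cast ha)
      have := log_log_pos_of_three_le (show (3 : ℝ) ≤ q.2.2 by exact_mod_cast hc)
      positivity
    · exact le_rfl
  · split_ifs with h
    · obtain ⟨hp1, hp2, hp3, ha, hb, hc⟩ := h
      simp only [primeLogLogWeight, if_pos (And.intro hp1 ha), if_pos (And.intro hp2 hb),
        if_pos (And.intro hp3 hc)]
      exact summand_le_mul_prod ht_lo.1.le ht_hi.1.le (by exact_mod_cast ha) (by exact_mod_cast hb)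
        (by exact_mod_cast hc)
    · have := log_log_pos_of_three_le (le_refl (3 : ℝ))
      exact mul_nonneg (by positivity) (mul_nonneg (hw _ _) (mul_nonneg (hw _ _) (hw _ _)))

/-- For `2η > 1` and `δ + η > 1`, the triple sum over odd primes
`S = ∑_{p₁,p₂,p₃≥3} [p₁p₂p₃ (log log p₁)^{2δ}(log log p₂)²]⁻¹
      (log p₃)² [(log log p₃)^{2η}(log(p₁p₂p₃))²]⁻¹` converges. -/
theorem statement17 (δ η : ℝ) (hδ : 0 < δ) (hη : 0 < η)
    (h1 : 1 < 2 * η) (h2 : 1 < δ + η) :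
    Summable (fun q : ℕ × ℕ × ℕ =>
      if q.1.Prime ∧ q.2.1.Prime ∧ q.2.2.Prime ∧ 3 ≤ q.1 ∧ 3 ≤ q.2.1 ∧ 3 ≤ q.2.2 then
        ((q.1 : ℝ) * q.2.1 * q.2.2 * (Real.log (Real.log q.1)) ^ (2 * δ) *
            (Real.log (Real.log q.2.1)) ^ 2)⁻¹ *
          ((Real.log q.2.2) ^ 2 /
            ((Real.log (Real.log q.2.2)) ^ (2 * η) *
              (Real.log ((q.1 : ℝ) * q.2.1 * q.2.2)) ^ 2))
      else 0) :=
  statement17_general δ η hδ h1 h2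
end
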